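/- (Theorem 1) Let n, Ξ be positive integers. Let A_c be an invertible n×n real matrix with ⟪v, A_c v⟫ ≤ −λ‖v‖² for all v ∈ ℝⁿ and some λ > 0. Let Γ be a symmetric positive definite Ξ×Ξ real matrix with μ‖v‖² ≤ ⟪v, Γ⁻¹v⟫ for all v ∈ ℝ^Ξ (μ > 0) and ‖Γ⁻¹‖ ≤ γ̄. Let ρ > 0, k_s, Φ'_M ≥ 0, Δ̄ ≥ 0, θ̄ ≥ 0 be real numbers, θ* ∈ ℝ^Ξ with ‖θ*‖ ≤ θ̄, and let e : [0,∞) → ℝⁿ, θ̂ : [0,∞) → ℝ^Ξ be differentiable with θ̃(t) = θ* − θ̂(t) and with Φ̂' : [0,∞) → ℝ^{n×Ξ}, Δ : [0,∞) → ℝⁿ satisfying ‖Φ̂'(t)‖ ≤ Φ'_M and ‖Δ(t)‖ ≤ Δ̄ for all t. Assume the closed-loop error dynamics ė(t) = A_c e(t) − k_s·sgn(e(t)) + Φ̂'(t)·θ̃(t) + Δ(t) and the adaptation law θ̂'(t) = −Γ·(A_c⁻¹Φ̂'(t))ᵀ·e(t) − ρ‖e(t)‖·θ̂(t). Define β₂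 = (Φ'_M·(‖A_c⁻¹‖ + 1) + ρ·γ̄·θ̄)/(2ρμ). If ρμ·β₂² + Δ̄ ≤ k_s, then e(t) → 0 as t → ∞ (asymptotic tracking error convergence). -/

import Mathlib

/-!
The function `V = ‖e‖²/2 + ⟪θ̃, Γ⁻¹θ̃⟫/2` is a Lyapunov function: along the closed loop,
`V' = ⟪e, A_c e⟫ + ‖e‖ (Φ'_M(‖A_c⁻¹‖ + 1)‖θ̃‖ + ργ̄θ̄‖θ̃‖ - ρμ‖θ̃‖² + Δ̄ - k_s)` at worst, and the
bracket is a concave quadratic in `‖θ̃‖` whose maximum `ρμβ₂² + Δ̄ - k_s` is nonpositive by the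
gain condition, so `V' ≤ -λ‖e‖²`. Hence `V` decreases, `e` and `θ̃` stay bounded, `ė` is
bounded and `e` is uniformly continuous. Barbalat's argument concludes: `V` converges, so it
cannot keep dropping by a fixed amount, which it would on every interval of fixed length
around a time where `‖e‖ ≥ ε`.
-/

open scoped RealInnerProductSpace

/-- Componentwise sign function. -/
noncomputable def signVec {n : ℕ} (v : EuclideanSpace ℝ (Fin n)) :
    EuclideanSpace ℝ (Fin n) := WithLp.toLp 2 (fun i => Real.sign (v i))

open Filter Topology Set

theorem Real.self_mul_sign (x : ℝ) : x * Real.sign x = |x| := by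
  rcases lt_trichotomy x 0 with hx | rfl | hx
  · simp [Real.sign_of_neg hx, abs_of_neg hx]
  · simp
  · simp [Real.sign_of_pos hx, abs_of_pos hx]

theorem inner_signVec_self {n : ℕ} (v : EuclideanSpace ℝ (Fin n)) :
    ⟪v, signVec v⟫ = ∑ i, |v i| := by
  simp only [PiLp.inner_apply, RCLike.inner_apply, conj_trivial, signVec]
  exact Finset.sum_congr rfl fun i _ => (mul_comm _ _).trans (Real.self_mul_sign (v i))

theorem norm_le_inner_signVec {n : ℕ} (v : EuclideanSpace ℝ (Fin n)) :
    ‖v‖ ≤ ⟪v, signVec v⟫ := by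
  have hsum : 0 ≤ ∑ i, |v i| := Finset.sum_nonneg fun i _ => abs_nonneg _
  rw [inner_signVec_self, EuclideanSpace.norm_eq]
  refine Real.sqrt_le_iff.2 ⟨hsum, ?_⟩
  simpa only [Real.norm_eq_abs, sq_abs] using
    Finset.sum_sq_le_sq_sum_of_nonneg (s := Finset.univ) fun i _ => abs_nonneg (v i)

theorem norm_signVec_le {n : ℕ} (v : EuclideanSpace ℝ (Fin n)) : ‖signVec v‖ ≤ √n := by
  rw [EuclideanSpace.norm_eq]
  refine Real.sqrt_le_sqrt ?_
  calc ∑ i, ‖signVec v i‖ ^ 2 ≤ ∑ _i : Fin n, (1 : ℝ) := by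
        refine Finset.sum_le_sum fun i _ => ?_
        rcases Real.sign_apply_eq (v i) with h | h | h <;> simp [signVec, h]
    _ = n := by simp

theorem sub_le_mul_sub_of_hasDerivAt_le {f f' : ℝ → ℝ} {a b C : ℝ} (hab : a ≤ b)
    (hf : ∀ t ∈ Icc a b, HasDerivAt f (f' t) t) (hC : ∀ t ∈ Ioo a b, f' t ≤ C) :
    f b - f a ≤ C * (b - a) := by
  refine (convex_Icc a b).image_sub_le_mul_sub_of_deriv_le
    (fun t ht => (hf t ht).continuousAt.continuousWithinAt) (fun t ht => ?_) (fun t ht => ?_)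
    a (left_mem_Icc.2 hab) b (right_mem_Icc.2 hab) hab
  all_goals rw [interior_Icc] at ht
  · exact (hf t (Ioo_subset_Icc_self ht)).differentiableAt.differentiableWithinAt
  · exact (hf t (Ioo_subset_Icc_self ht)).deriv ▸ hC t ht

theorem antitoneOn_Ici_of_hasDerivAt_nonpos {f f' : ℝ → ℝ} {a : ℝ}
    (hf : ∀ t ≥ a, HasDerivAt f (f' t) t) (hf' : ∀ t ≥ a, f' t ≤ 0) : AntitoneOn f (Ici a) :=
  fun s hs t ht hst => by
    linarith [sub_le_mul_sub_of_hasDerivAt_le (C := 0) hst (fun u hu => hf u (hs.trans hu.1))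
      fun u hu => hf' u (hs.trans hu.1.le)]

theorem AntitoneOn.exists_tendsto_atTop_of_Ici {f : ℝ → ℝ} {a : ℝ} (hf : AntitoneOn f (Ici a))
    (hbdd : BddBelow (f '' Ici a)) : ∃ l, Tendsto f atTop (𝓝 l) := by
  have hanti : Antitone fun t => f (max t a) := fun s t hst =>
    hf (le_max_right s a) (le_max_right t a) (max_le_max_right a hst)
  have hbdd' : BddBelow (range fun t => f (max t a)) :=
    hbdd.mono (range_subset_iff.2 fun t => mem_image_of_mem f (le_max_right t a))
  refine ⟨_, (tendsto_atTop_ciInf hanti hbdd').congr' ?_⟩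
  filter_upwards [eventually_ge_atTop a] with t ht
  rw [max_eq_left ht]

theorem uniformContinuousOn_Ici_of_norm_deriv_le {E : Type*} [NormedAddCommGroup E]
    [NormedSpace ℝ E] {f f' : ℝ → E} {a L : ℝ} (hf : ∀ t ≥ a, HasDerivAt f (f' t) t)
    (hL : ∀ t ≥ a, ‖f' t‖ ≤ L) : UniformContinuousOn f (Ici a) :=
  ((convex_Ici a).lipschitzOnWith_of_nnnorm_hasDerivWithin_le (C := L.toNNReal)
    (fun t ht => (hf t ht).hasDerivWithinAt) fun t ht => by
      rw [← NNReal.coe_le_coe, coe_nnnorm, Real.coe_toNNReal']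
      exact (hL t ht).trans (le_max_left L 0)).uniformContinuousOn

/-- Barbalat's lemma in Lyapunov form. -/
theorem tendsto_zero_of_hasDerivAt_le_neg_mul_norm_sq {E : Type*} [NormedAddCommGroup E]
    {e : ℝ → E} {V V' : ℝ → ℝ} {lam : ℝ} (hlam : 0 < lam) (he : UniformContinuousOn e (Ici 0))
    (hV : ∀ t ≥ 0, HasDerivAt V (V' t) t) (hV' : ∀ t ≥ 0, V' t ≤ -lam * ‖e t‖ ^ 2)
    (hbdd : BddBelow (V '' Ici 0)) : Tendsto e atTop (𝓝 0) := by
  have hanti := antitoneOn_Ici_of_hasDerivAt_nonpos hV fun t ht =>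
    (hV' t ht).trans (by nlinarith [sq_nonneg ‖e t‖])
  obtain ⟨l, hl⟩ := hanti.exists_tendsto_atTop_of_Ici hbdd
  refine Metric.tendsto_atTop.2 fun ε hε => ?_
  obtain ⟨δ, hδ, hclose⟩ := Metric.uniformContinuousOn_iff.1 he (ε / 2) (half_pos hε)
  set c := lam * (ε / 2) ^ 2 * (δ / 2)
  have hc : 0 < c := by positivity
  have hgap : Tendsto (fun t => V t - V (t - δ / 2)) atTop (𝓝 0) := by
    simpa [sub_eq_add_neg] using
      hl.sub (hl.comp (tendsto_atTop_add_const_right _ (-(δ / 2)) tendsto_id))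
  obtain ⟨N, hN⟩ := eventually_atTop.1 (hgap.eventually (Ioi_mem_nhds (neg_neg_of_pos hc)))
  refine ⟨max N (δ / 2), fun t ht => ?_⟩
  rw [dist_zero_right]
  by_contra! hfar
  have ht0 : 0 ≤ t - δ / 2 := by linarith [le_max_right N (δ / 2)]
  -- uniform continuity keeps `e` away from `0` on `[t - δ/2, t]`, so `V` drops by at least `c`
  have hnear : ∀ s ∈ Icc (t - δ / 2) t, ε / 2 ≤ ‖e s‖ := fun s hs => by
    have hs0 : 0 ≤ s := ht0.trans hs.1
    have hdist : dist s t < δ := by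
      rw [Real.dist_eq, abs_of_nonpos (by linarith [hs.2])]; linarith [hs.1]
    linarith [hclose s hs0 t (hs0.trans hs.2) hdist, dist_eq_norm (e s) (e t),
      norm_sub_norm_le (e t) (e s), norm_sub_rev (e s) (e t)]
  have hdrop := sub_le_mul_sub_of_hasDerivAt_le (a := t - δ / 2) (b := t)
    (C := -(lam * (ε / 2) ^ 2)) (by linarith) (fun s hs => hV s (ht0.trans hs.1)) fun s hs => by
      have hsq := pow_le_pow_left₀ (half_pos hε).le (hnear s (Ioo_subset_Icc_self hs)) 2
      linarith [hV' s (ht0.trans hs.1.le), mul_le_mul_of_nonneg_left hsq hlam.le]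
  have hc_eq : -(lam * (ε / 2) ^ 2) * (t - (t - δ / 2)) = -c := by ring
  linarith [hN t (le_of_max_le_left ht)]

section AdaptiveLoop

variable {E F : Type*} [NormedAddCommGroup E] [NormedAddCommGroup F] [InnerProductSpace ℝ F]

noncomputable def adaptiveLyapunov (Γ : F ≃L[ℝ] F) (x : E) (w : F) : ℝ :=
  ‖x‖ ^ 2 / 2 + ⟪w, Γ.symm w⟫ / 2

section Bounds

variable {μ : ℝ} {Γ : F ≃L[ℝ] F} (hμ : 0 < μ) (hμΓ : ∀ v, μ * ‖v‖ ^ 2 ≤ ⟪v, Γ.symm v⟫)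
include hμ hμΓ

theorem adaptiveLyapunov_nonneg (x : E) (w : F) : 0 ≤ adaptiveLyapunov Γ x w := by
  have := hμΓ w
  unfold adaptiveLyapunov
  nlinarith [sq_nonneg ‖x‖, sq_nonneg ‖w‖]

theorem norm_le_sqrt_two_mul_adaptiveLyapunov (x : E) (w : F) :
    ‖x‖ ≤ √(2 * adaptiveLyapunov Γ x w) := by
  refine Real.le_sqrt_of_sq_le ?_
  have := hμΓ w
  unfold adaptiveLyapunov
  nlinarith [sq_nonneg ‖w‖]

theorem norm_le_sqrt_two_mul_adaptiveLyapunov_div (x : E) (w : F) :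
    ‖w‖ ≤ √(2 * adaptiveLyapunov Γ x w / μ) := by
  refine Real.le_sqrt_of_sq_le ((le_div_iff₀ hμ).2 ?_)
  have := hμΓ w
  unfold adaptiveLyapunov
  nlinarith [sq_nonneg ‖x‖]

end Bounds

variable [InnerProductSpace ℝ E]

theorem ContinuousLinearEquiv.inner_symm_comm_of_inner_comm {Γ : F ≃L[ℝ] F}
    (hΓ : ∀ v w, ⟪Γ v, w⟫ = ⟪v, Γ w⟫) (v w : F) : ⟪Γ.symm v, w⟫ = ⟪v, Γ.symm w⟫ := by
  simpa using (hΓ (Γ.symm v) (Γ.symm w)).symm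

theorem hasDerivAt_adaptiveLyapunov {Γ : F ≃L[ℝ] F} (hΓ : ∀ v w, ⟪Γ v, w⟫ = ⟪v, Γ w⟫)
    {x : ℝ → E} {w : ℝ → F} {x' : E} {w' : F} {t : ℝ} (hx : HasDerivAt x x' t)
    (hw : HasDerivAt w w' t) :
    HasDerivAt (fun s => adaptiveLyapunov Γ (x s) (w s)) (⟪x t, x'⟫ + ⟪w t, Γ.symm w'⟫) t := by
  have hΓw : HasDerivAt (fun s => Γ.symm (w s)) (Γ.symm w') t :=
    (Γ.symm : F →L[ℝ] F).hasFDerivAt.comp_hasDerivAt t hw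
  refine ((hx.norm_sq.div_const 2).add ((hw.inner ℝ hΓw).div_const 2)).congr_deriv ?_
  rw [← Γ.inner_symm_comm_of_inner_comm hΓ w' (w t), real_inner_comm (Γ.symm w') (w t)]
  ring

theorem norm_closedLoop_le {μ : ℝ} {Γ : F ≃L[ℝ] F} (hμ : 0 < μ)
    (hμΓ : ∀ v, μ * ‖v‖ ^ 2 ≤ ⟪v, Γ.symm v⟫) (A : E →L[ℝ] E) (P : F →L[ℝ] E) (x s d : E) (w : F)
    {c k S ΦM Δbar : ℝ} (hc : adaptiveLyapunov Γ x w ≤ c) (hk : 0 ≤ k) (hs : ‖s‖ ≤ S)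
    (hΦM : 0 ≤ ΦM) (hP : ‖P‖ ≤ ΦM) (hd : ‖d‖ ≤ Δbar) :
    ‖A x - k • s + P w + d‖ ≤ ‖A‖ * √(2 * c) + k * S + ΦM * √(2 * c / μ) + Δbar := calc
  ‖A x - k • s + P w + d‖ ≤ ‖A x‖ + ‖k • s‖ + ‖P w‖ + ‖d‖ := by
    linarith [norm_add_le (A x - k • s + P w) d, norm_add_le (A x - k • s) (P w),
      norm_sub_le (A x) (k • s)]
  _ ≤ ‖A‖ * ‖x‖ + k * ‖s‖ + ‖P‖ * ‖w‖ + ‖d‖ := by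
    rw [norm_smul, Real.norm_of_nonneg hk]
    gcongr <;> exact ContinuousLinearMap.le_opNorm _ _
  _ ≤ _ := by
    gcongr
    · exact (norm_le_sqrt_two_mul_adaptiveLyapunov hμ hμΓ x w).trans (by gcongr)
    · exact (norm_le_sqrt_two_mul_adaptiveLyapunov_div hμ hμΓ x w).trans (by gcongr)

theorem inner_closedLoop_add_inner_adaptation_le [CompleteSpace E] [CompleteSpace F]
    (A : E ≃L[ℝ] E) (Γ : F ≃L[ℝ] F) (P : F →L[ℝ] E) (x s d : E) (θstar θhat : F)
    {μ ρ k ΦM Δbar Γθ β : ℝ} (hμ : 0 ≤ μ) (hρ : 0 ≤ ρ) (hk : 0 ≤ k)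
    (hμΓ : μ * ‖θstar - θhat‖ ^ 2 ≤ ⟪θstar - θhat, Γ.symm (θstar - θhat)⟫)
    (hΓθ : ‖Γ.symm θstar‖ ≤ Γθ) (hP : ‖P‖ ≤ ΦM) (hd : ‖d‖ ≤ Δbar) (hs : ‖x‖ ≤ ⟪x, s⟫)
    (hβ : ΦM * (‖(A.symm : E →L[ℝ] E)‖ + 1) + ρ * Γθ = 2 * (ρ * μ) * β)
    (hgain : ρ * μ * β ^ 2 + Δbar ≤ k) :
    ⟪x, A x - k • s + P (θstar - θhat) + d⟫
        + ⟪θstar - θhat, ((A.symm : E →L[ℝ] E).comp P).adjoint x + (ρ * ‖x‖) • Γ.symm θhat⟫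
      ≤ ⟪x, A x⟫ := by
  set w := θstar - θhat
  have hθhat : Γ.symm θhat = Γ.symm θstar - Γ.symm w := by simp [w]
  have hsign : k * ‖x‖ ≤ k * ⟪x, s⟫ := mul_le_mul_of_nonneg_left hs hk
  have hcross : ⟪x, P w⟫ ≤ ‖x‖ * (ΦM * ‖w‖) :=
    (real_inner_le_norm _ _).trans (by gcongr; exact (P.le_opNorm w).trans (by gcongr))
  have hcross' : ⟪w, ((A.symm : E →L[ℝ] E).comp P).adjoint x⟫
      ≤ ‖(A.symm : E →L[ℝ] E)‖ * (ΦM * ‖w‖) * ‖x‖ := by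
    rw [ContinuousLinearMap.adjoint_inner_right]
    refine (real_inner_le_norm _ _).trans (mul_le_mul_of_nonneg_right ?_ (norm_nonneg x))
    exact ((A.symm : E →L[ℝ] E).le_opNorm _).trans
      (by gcongr; exact (P.le_opNorm w).trans (by gcongr))
  have hdist : ⟪x, d⟫ ≤ Δbar * ‖x‖ := (real_inner_le_norm _ _).trans (by rw [mul_comm]; gcongr)
  have hleak : ⟪w, Γ.symm θhat⟫ ≤ Γθ * ‖w‖ - μ * ‖w‖ ^ 2 := by
    rw [hθhat, inner_sub_right]
    linarith [(real_inner_le_norm w _).trans (mul_le_mul_of_nonneg_left hΓθ (norm_nonneg w))]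
  -- completing the square in `‖w‖` around `β`
  have hbracket : (ΦM * (‖(A.symm : E →L[ℝ] E)‖ + 1) + ρ * Γθ) * ‖w‖ - ρ * μ * ‖w‖ ^ 2
      + Δbar - k ≤ 0 := by
    rw [hβ]; nlinarith [mul_nonneg (mul_nonneg hρ hμ) (sq_nonneg (‖w‖ - β))]
  simp only [inner_add_right, inner_sub_right, real_inner_smul_right]
  linarith [mul_nonpos_of_nonneg_of_nonpos (norm_nonneg x) hbracket,
    mul_le_mul_of_nonneg_left hleak (mul_nonneg hρ (norm_nonneg x))]

end AdaptiveLoop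

theorem tracking_error_asymptotic_convergence_general (n Ξ : ℕ)
    (A_c : EuclideanSpace ℝ (Fin n) ≃L[ℝ] EuclideanSpace ℝ (Fin n))
    (lam : ℝ) (hlam : 0 < lam)
    (hAc : ∀ v : EuclideanSpace ℝ (Fin n), ⟪v, A_c v⟫ ≤ -lam * ‖v‖ ^ 2)
    (Γ : EuclideanSpace ℝ (Fin Ξ) ≃L[ℝ] EuclideanSpace ℝ (Fin Ξ))
    (hΓsymm : ∀ v w : EuclideanSpace ℝ (Fin Ξ), ⟪Γ v, w⟫ = ⟪v, Γ w⟫)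
    (μ γbar : ℝ) (hμ : 0 < μ) (hγbar : 0 ≤ γbar)
    (hμΓ : ∀ v : EuclideanSpace ℝ (Fin Ξ), μ * ‖v‖ ^ 2 ≤ ⟪v, Γ.symm v⟫)
    (hΓinv : ‖(Γ.symm : EuclideanSpace ℝ (Fin Ξ) →L[ℝ] EuclideanSpace ℝ (Fin Ξ))‖ ≤ γbar)
    (ρ k_s ΦM Δbar θbar : ℝ) (hρ : 0 < ρ) (hks : 0 ≤ k_s) (hΦM : 0 ≤ ΦM)
    (θstar : EuclideanSpace ℝ (Fin Ξ)) (hθstar : ‖θstar‖ ≤ θbar)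
    (e : ℝ → EuclideanSpace ℝ (Fin n)) (θhat : ℝ → EuclideanSpace ℝ (Fin Ξ))
    (Φ' : ℝ → (EuclideanSpace ℝ (Fin Ξ) →L[ℝ] EuclideanSpace ℝ (Fin n)))
    (Δ : ℝ → EuclideanSpace ℝ (Fin n))
    (hΦ'bdd : ∀ t ≥ (0 : ℝ), ‖Φ' t‖ ≤ ΦM) (hΔbdd : ∀ t ≥ (0 : ℝ), ‖Δ t‖ ≤ Δbar)
    (hdyn : ∀ t ≥ (0 : ℝ), HasDerivAt e
      (A_c (e t) - k_s • signVec (e t) + Φ' t (θstar - θhat t) + Δ t) t)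
    (hadapt : ∀ t ≥ (0 : ℝ), HasDerivAt θhat
      (-(Γ ((((A_c.symm : EuclideanSpace ℝ (Fin n) →L[ℝ] EuclideanSpace ℝ (Fin n)).comp
          (Φ' t)).adjoint) (e t)))
        - (ρ * ‖e t‖) • θhat t) t)
    (β₂ : ℝ)
    (hβ₂ : β₂ = (ΦM * (‖(A_c.symm : EuclideanSpace ℝ (Fin n) →L[ℝ] EuclideanSpace ℝ (Fin n))‖ + 1)
        + ρ * γbar * θbar) / (2 * (ρ * μ)))
    (hgain : ρ * μ * β₂ ^ 2 + Δbar ≤ k_s) :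
    Filter.Tendsto e Filter.atTop (nhds 0) := by
  set Ac : EuclideanSpace ℝ (Fin n) →L[ℝ] EuclideanSpace ℝ (Fin n) := ↑A_c
  set Ainv : EuclideanSpace ℝ (Fin n) →L[ℝ] EuclideanSpace ℝ (Fin n) := ↑A_c.symm
  set w : ℝ → EuclideanSpace ℝ (Fin Ξ) := fun t => θstar - θhat t
  set e' := fun t => A_c (e t) - k_s • signVec (e t) + Φ' t (w t) + Δ t
  set w' := fun t => Γ ((Ainv.comp (Φ' t)).adjoint (e t)) + (ρ * ‖e t‖) • θhat t
  set V := fun t => adaptiveLyapunov Γ (e t) (w t)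
  have hw : ∀ t ≥ (0 : ℝ), HasDerivAt w (w' t) t := fun t ht =>
    ((hasDerivAt_const t θstar).sub (hadapt t ht)).congr_deriv
      (by rw [zero_sub, neg_sub, sub_neg_eq_add, add_comm])
  have hV : ∀ t ≥ (0 : ℝ), HasDerivAt V (⟪e t, e' t⟫ + ⟪w t, Γ.symm (w' t)⟫) t := fun t ht =>
    hasDerivAt_adaptiveLyapunov hΓsymm (hdyn t ht) (hw t ht)
  have hΓθ : ‖Γ.symm θstar‖ ≤ γbar * θbar :=
    (ContinuousLinearMap.le_of_opNorm_le _ hΓinv θstar).trans (by gcongr)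
  have hβ : ΦM * (‖Ainv‖ + 1) + ρ * (γbar * θbar) = 2 * (ρ * μ) * β₂ := by
    rw [hβ₂]; field_simp
  have hV' : ∀ t ≥ (0 : ℝ), ⟪e t, e' t⟫ + ⟪w t, Γ.symm (w' t)⟫ ≤ -lam * ‖e t‖ ^ 2 := fun t ht => by
    simp only [w', map_add, map_smul, ContinuousLinearEquiv.symm_apply_apply]
    exact (inner_closedLoop_add_inner_adaptation_le A_c Γ (Φ' t) (e t) _ (Δ t) θstar (θhat t)
      hμ.le hρ.le hks (hμΓ _) hΓθ (hΦ'bdd t ht) (hΔbdd t ht) (norm_le_inner_signVec _) hβ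
      hgain).trans (hAc _)
  have hVanti := antitoneOn_Ici_of_hasDerivAt_nonpos hV fun t ht =>
    (hV' t ht).trans (by nlinarith [sq_nonneg ‖e t‖])
  have he' : ∀ t ≥ (0 : ℝ), ‖e' t‖ ≤
      ‖Ac‖ * √(2 * V 0) + k_s * √n + ΦM * √(2 * V 0 / μ) + Δbar := fun t ht =>
    norm_closedLoop_le hμ hμΓ Ac (Φ' t) (e t) (signVec (e t)) (Δ t) (w t)
      (hVanti (le_refl (0 : ℝ)) ht ht) hks (norm_signVec_le _) hΦM (hΦ'bdd t ht) (hΔbdd t ht)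
  exact tendsto_zero_of_hasDerivAt_le_neg_mul_norm_sq hlam
    (uniformContinuousOn_Ici_of_norm_deriv_le hdyn he') hV hV' ⟨0, by
      rintro _ ⟨t, -, rfl⟩; exact adaptiveLyapunov_nonneg hμ hμΓ _ _⟩

/-- Theorem 1 of the paper: asymptotic tracking error convergence.  For the closed-loop
error dynamics `ė = A_c e − k_s sgn(e) + Φ̂'θ̃ + Δ` (with `A_c` invertible and its symmetric
part negative definite) together with the adaptation law
`θ̂' = −Γ(A_c⁻¹Φ̂')ᵀe − ρ‖e‖θ̂`, the gain condition `ρμβ₂² + Δ̄ ≤ k_s` with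
`β₂ = (Φ'_M(‖A_c⁻¹‖+1) + ργ̄θ̄)/(2ρμ)` ensures `e(t) → 0` as `t → ∞`.
Invertible matrices are encoded as continuous linear equivalences of Euclidean space. -/
theorem tracking_error_asymptotic_convergence (n Ξ : ℕ) (hn : 0 < n) (hΞ : 0 < Ξ)
    (A_c : EuclideanSpace ℝ (Fin n) ≃L[ℝ] EuclideanSpace ℝ (Fin n))
    (lam : ℝ) (hlam : 0 < lam)
    (hAc : ∀ v : EuclideanSpace ℝ (Fin n), ⟪v, A_c v⟫ ≤ -lam * ‖v‖ ^ 2)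
    (Γ : EuclideanSpace ℝ (Fin Ξ) ≃L[ℝ] EuclideanSpace ℝ (Fin Ξ))
    (hΓsymm : ∀ v w : EuclideanSpace ℝ (Fin Ξ), ⟪Γ v, w⟫ = ⟪v, Γ w⟫)
    (hΓpos : ∀ v : EuclideanSpace ℝ (Fin Ξ), v ≠ 0 → 0 < ⟪v, Γ v⟫)
    (μ γbar : ℝ) (hμ : 0 < μ) (hγbar : 0 ≤ γbar)
    (hμΓ : ∀ v : EuclideanSpace ℝ (Fin Ξ), μ * ‖v‖ ^ 2 ≤ ⟪v, Γ.symm v⟫)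
    (hΓinv : ‖(Γ.symm : EuclideanSpace ℝ (Fin Ξ) →L[ℝ] EuclideanSpace ℝ (Fin Ξ))‖ ≤ γbar)
    (ρ k_s ΦM Δbar θbar : ℝ) (hρ : 0 < ρ) (hks : 0 ≤ k_s) (hΦM : 0 ≤ ΦM)
    (hΔbar : 0 ≤ Δbar) (hθbar : 0 ≤ θbar)
    (θstar : EuclideanSpace ℝ (Fin Ξ)) (hθstar : ‖θstar‖ ≤ θbar)
    (e : ℝ → EuclideanSpace ℝ (Fin n)) (θhat : ℝ → EuclideanSpace ℝ (Fin Ξ))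
    (Φ' : ℝ → (EuclideanSpace ℝ (Fin Ξ) →L[ℝ] EuclideanSpace ℝ (Fin n)))
    (Δ : ℝ → EuclideanSpace ℝ (Fin n))
    (hΦ'bdd : ∀ t ≥ (0 : ℝ), ‖Φ' t‖ ≤ ΦM) (hΔbdd : ∀ t ≥ (0 : ℝ), ‖Δ t‖ ≤ Δbar)
    (hdyn : ∀ t ≥ (0 : ℝ), HasDerivAt e
      (A_c (e t) - k_s • signVec (e t) + Φ' t (θstar - θhat t) + Δ t) t)
    (hadapt : ∀ t ≥ (0 : ℝ), HasDerivAt θhat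
      (-(Γ ((((A_c.symm : EuclideanSpace ℝ (Fin n) →L[ℝ] EuclideanSpace ℝ (Fin n)).comp
          (Φ' t)).adjoint) (e t)))
        - (ρ * ‖e t‖) • θhat t) t)
    (β₂ : ℝ)
    (hβ₂ : β₂ = (ΦM * (‖(A_c.symm : EuclideanSpace ℝ (Fin n) →L[ℝ] EuclideanSpace ℝ (Fin n))‖ + 1)
        + ρ * γbar * θbar) / (2 * (ρ * μ)))
    (hgain : ρ * μ * β₂ ^ 2 + Δbar ≤ k_s) :
    Filter.Tendsto e Filter.atTop (nhds 0) :=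
  tracking_error_asymptotic_convergence_general n Ξ A_c lam hlam hAc Γ hΓsymm μ γbar hμ hγbar hμΓ
    hΓinv ρ k_s ΦM Δbar θbar hρ hks hΦM θstar hθstar e θhat Φ' Δ hΦ'bdd hΔbdd hdyn hadapt β₂ hβ₂
    hgain
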